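/- (Rolle's theorem for α-differentiable functions) Let 0 < a < b, β > 0, α ∈ (0,1), and let f : [a,b] → ℝ be a function such that: (1) f is continuous on [a,b]; (2) f is α-differentiable on (a,b) in the sense of the local M-derivative; (3) f(a) = f(b). Then there exists c ∈ (a,b) such that 𝒟_M^{α,β} f(c) = 0. -/

import Mathlib

open Filter Topology

/-- One-parameter Mittag-Leffler function `E_β(x) = ∑_{k=0}^∞ x^k / Γ(βk+1)`. -/
noncomputable def mittagLeffler (β x : ℝ) : ℝ :=
  ∑' k : ℕ, x ^ k / Real.Gamma (β * k + 1)

/-- `f` has local M-derivative `L` of order `α` with parameter `β` at `t`, i.e.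
`lim_{ε→0} (f (t · E_β (ε t^{-α})) - f t)/ε = L`. -/
def HasLocalMDerivAt (α β : ℝ) (f : ℝ → ℝ) (t L : ℝ) : Prop :=
  Tendsto (fun ε : ℝ => (f (t * mittagLeffler β (ε * t ^ (-α))) - f t) / ε)
    (𝓝[≠] (0 : ℝ)) (𝓝 L)

/-!
Since `E_β(0) = 1`, the curve `ε ↦ t · E_β(ε t^{-α})` passes through `t` at `ε = 0`, and it is
continuous there because `Γ ≥ 1/2` on `[1, ∞)` makes the series of `E_β` converge uniformly near `0`.
So the local M-derivative of `f` at `t` is the ordinary derivative at `0` of `f` along this curve,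
and a local extremum of `f` at `t` is one of `f` along the curve: Fermat's theorem applies, and
Rolle's theorem follows from an interior extremum of `f` on `[a, b]`.
-/

open Set

theorem Real.half_le_Gamma {y : ℝ} (hy : 1 ≤ y) : 1 / 2 ≤ Real.Gamma y := by
  have one_le_Gamma {z : ℝ} (hz : 2 ≤ z) : 1 ≤ Real.Gamma z := by
    simpa [Real.Gamma_two] using Real.Gamma_strictMonoOn_Ici.monotoneOn self_mem_Ici hz hz
  rcases le_or_gt 2 y with h2 | h2
  · linarith [one_le_Gamma h2]
  · have h1 := one_le_Gamma (by linarith : 2 ≤ y + 1)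
    rw [Real.Gamma_add_one (by positivity)] at h1
    nlinarith [Real.Gamma_pos_of_pos (by linarith : 0 < y)]

@[simp]
theorem mittagLeffler_zero (β : ℝ) : mittagLeffler β 0 = 1 := by
  rw [mittagLeffler, tsum_eq_single 0 fun k hk => by simp [hk]]
  simp

theorem norm_mittagLeffler_term_le {β r x : ℝ} (hβ : 0 < β) (hx : |x| ≤ r) (k : ℕ) :
    ‖x ^ k / Real.Gamma (β * k + 1)‖ ≤ 2 * r ^ k := by
  have hΓ : 1 / 2 ≤ Real.Gamma (β * k + 1) :=
    Real.half_le_Gamma (le_add_of_nonneg_left (by positivity))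
  have hΓpos : 0 < Real.Gamma (β * k + 1) := by linarith
  rw [Real.norm_eq_abs, abs_div, abs_pow, abs_of_pos hΓpos, div_le_iff₀ hΓpos]
  have hpow : |x| ^ k ≤ r ^ k := pow_le_pow_left₀ (abs_nonneg x) hx k
  nlinarith [pow_nonneg (abs_nonneg x) k]

theorem continuousOn_mittagLeffler {β r : ℝ} (hβ : 0 < β) (hr₀ : 0 ≤ r) (hr : r < 1) :
    ContinuousOn (mittagLeffler β) (Icc (-r) r) :=
  continuousOn_tsum (fun k => by fun_prop)
    ((summable_geometric_of_lt_one hr₀ hr).mul_left 2)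
    fun k _ hx => norm_mittagLeffler_term_le hβ (abs_le.mpr hx) k

theorem continuousAt_mittagLeffler_zero {β : ℝ} (hβ : 0 < β) :
    ContinuousAt (mittagLeffler β) 0 :=
  (continuousOn_mittagLeffler hβ (by norm_num : (0 : ℝ) ≤ 1 / 2) (by norm_num)).continuousAt
    (Icc_mem_nhds (by norm_num) (by norm_num))

theorem hasLocalMDerivAt_iff_hasDerivAt {α β t L : ℝ} {f : ℝ → ℝ} :
    HasLocalMDerivAt α β f t L ↔
      HasDerivAt (fun ε => f (t * mittagLeffler β (ε * t ^ (-α)))) L 0 := by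
  rw [hasDerivAt_iff_tendsto_slope, HasLocalMDerivAt]
  refine tendsto_congr fun ε => ?_
  simp [slope_fun_def_field]

theorem HasLocalMDerivAt.eq_zero_of_isLocalExtr {α β t L : ℝ} {f : ℝ → ℝ} (hβ : 0 < β)
    (hf : HasLocalMDerivAt α β f t L) (hext : IsLocalExtr f t) : L = 0 := by
  have hcurve : ContinuousAt (fun ε => t * mittagLeffler β (ε * t ^ (-α))) 0 :=
    continuousAt_const.mul
      ((continuousAt_mittagLeffler_zero hβ).comp_of_eq (by fun_prop) (zero_mul _))
  have hext' : IsLocalExtr f (t * mittagLeffler β (0 * t ^ (-α))) := by simpa using hext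
  exact (hext'.comp_continuous (g := fun ε => t * mittagLeffler β (ε * t ^ (-α))) hcurve)
    |>.hasDerivAt_eq_zero (hasLocalMDerivAt_iff_hasDerivAt.mp hf)

theorem stmt12_general (a b α β : ℝ) (hab : a < b)
    (hβ : 0 < β)
    (f D : ℝ → ℝ) (hc : ContinuousOn f (Set.Icc a b))
    (hd : ∀ x ∈ Set.Ioo a b, HasLocalMDerivAt α β f x (D x))
    (hfab : f a = f b) :
    ∃ c ∈ Set.Ioo a b, D c = 0 := by
  obtain ⟨c, hc_mem, hext⟩ := exists_isLocalExtr_Ioo hab hc hfab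
  exact ⟨c, hc_mem, (hd c hc_mem).eq_zero_of_isLocalExtr hβ hext⟩

/-- Rolle's theorem for α-differentiable functions. -/
theorem stmt12 (a b α β : ℝ) (ha : 0 < a) (hab : a < b)
    (hα : α ∈ Set.Ioo (0 : ℝ) 1) (hβ : 0 < β)
    (f D : ℝ → ℝ) (hc : ContinuousOn f (Set.Icc a b))
    (hd : ∀ x ∈ Set.Ioo a b, HasLocalMDerivAt α β f x (D x))
    (hfab : f a = f b) :
    ∃ c ∈ Set.Ioo a b, D c = 0 :=
  stmt12_general a b α β hab hβ f D hc hd hfab
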